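/- In a spherical triangle ABC on the unit sphere, if D and E are the midpoints of the sides AB and BC respectively (midpoints along the minimizing great-circle arcs), then the spherical distance DE satisfies DE > AC/2. -/

import Mathlib

/-!
Write `a = BC`, `b = CA`, `c = AB`. The arc midpoints satisfy `A + B = 2 cos (c/2) • D` and
`B + C = 2 cos (a/2) • E`, hence `4 cos (c/2) cos (a/2) ⟪D, E⟫ = 1 + cos a + cos b + cos c`.
The claim `⟪D, E⟫ < cos (b/2)` then reduces, after squaring, to
`(1 + cos a + cos b + cos c)² < 2 (1 + cos a) (1 + cos b) (1 + cos c)`, and the difference of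
the two sides is exactly the Gram determinant of `A, B, C`, which is positive because the
vertices are linearly independent.
-/

open scoped RealInnerProductSpace

/-- The intrinsic (geodesic) distance on the unit sphere. -/
noncomputable def sphDist (p q : EuclideanSpace ℝ (Fin 3)) : ℝ :=
  Real.arccos ⟪p, q⟫

open Real

lemma cos_half_arccos {x : ℝ} (hx₁ : -1 ≤ x) (hx₂ : x ≤ 1) :
    cos (arccos x / 2) = √((1 + x) / 2) := by
  rw [cos_half (by linarith [pi_pos, arccos_nonneg x]) (arccos_le_pi x), cos_arccos hx₁ hx₂]

lemma half_arccos_lt_arccos {x y : ℝ} (hx₁ : -1 ≤ x) (hx₂ : x ≤ 1) (hy : -1 ≤ y)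
    (h : y < √((1 + x) / 2)) : arccos x / 2 < arccos y := by
  have hmem : arccos x / 2 ∈ Set.Icc 0 π :=
    ⟨by linarith [arccos_nonneg x], by linarith [arccos_le_pi x, pi_pos]⟩
  rw [← cos_half_arccos hx₁ hx₂] at h
  calc arccos x / 2 = arccos (cos (arccos x / 2)) := (arccos_cos hmem.1 hmem.2).symm
    _ < arccos y := arccos_lt_arccos hy h (cos_le_one _)

section

variable {F : Type*} [NormedAddCommGroup F] [InnerProductSpace ℝ F]

lemma add_eq_smul_of_arccos_midpoint {u v d : F} (hu : ‖u‖ = 1) (hv : ‖v‖ = 1) (hd : ‖d‖ = 1)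
    (hsym : arccos ⟪u, d⟫ = arccos ⟪d, v⟫)
    (hsum : arccos ⟪u, d⟫ + arccos ⟪d, v⟫ = arccos ⟪u, v⟫) :
    u + v = (2 * √((1 + ⟪u, v⟫) / 2)) • d := by
  obtain ⟨huv₁, huv₂⟩ := real_inner_mem_Icc_of_norm_eq_one hu hv
  obtain ⟨hud₁, hud₂⟩ := real_inner_mem_Icc_of_norm_eq_one hu hd
  obtain ⟨hdv₁, hdv₂⟩ := real_inner_mem_Icc_of_norm_eq_one hd hv
  have hud : ⟪u, d⟫ = √((1 + ⟪u, v⟫) / 2) := by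
    rw [← cos_half_arccos huv₁ huv₂, ← hsum, ← hsym, add_self_div_two, cos_arccos hud₁ hud₂]
  have hvd : ⟪v, d⟫ = √((1 + ⟪u, v⟫) / 2) := by
    rw [real_inner_comm, ← cos_half_arccos huv₁ huv₂, ← hsum, hsym, add_self_div_two,
      cos_arccos hdv₁ hdv₂]
  have hk : √((1 + ⟪u, v⟫) / 2) ^ 2 = (1 + ⟪u, v⟫) / 2 := sq_sqrt (by linarith)
  rw [← sub_eq_zero, ← inner_self_eq_zero (𝕜 := ℝ)]
  simp only [inner_sub_left, inner_sub_right, inner_add_left, inner_add_right,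
    real_inner_smul_left, real_inner_smul_right]
  simp only [real_inner_self_eq_norm_sq, hu, hv, hd, real_inner_comm u v, real_inner_comm u d,
    real_inner_comm v d, hud, hvd]
  linear_combination -4 * hk

lemma gram_det_pos_of_linearIndependent {u v w : F} (hu : ‖u‖ = 1) (hv : ‖v‖ = 1)
    (hw : ‖w‖ = 1) (h : LinearIndependent ℝ ![u, v, w]) :
    0 < 1 - ⟪v, w⟫ ^ 2 - ⟪u, w⟫ ^ 2 - ⟪u, v⟫ ^ 2 + 2 * ⟪v, w⟫ * ⟪u, w⟫ * ⟪u, v⟫ := by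
  have hdet := (Matrix.posDef_gram_of_linearIndependent h).det_pos
  simp only [Matrix.det_fin_three, Matrix.gram_apply, Matrix.cons_val_zero, Matrix.cons_val_one,
    Matrix.cons_val_two, Matrix.tail_cons, Matrix.head_cons, real_inner_self_eq_norm_sq, hu, hv, hw,
    real_inner_comm u v, real_inner_comm u w, real_inner_comm v w] at hdet
  linarith

end

lemma lt_of_four_mul_eq_of_gram_pos {a b c k l m p : ℝ} (hk : 0 ≤ k) (hl : 0 ≤ l) (hm : 0 ≤ m)
    (hk2 : k ^ 2 = (1 + c) / 2) (hl2 : l ^ 2 = (1 + a) / 2) (hm2 : m ^ 2 = (1 + b) / 2)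
    (hgram : 0 < 1 - a ^ 2 - b ^ 2 - c ^ 2 + 2 * a * b * c)
    (hp : 4 * k * l * p = 1 + a + b + c) : p < m := by
  have hsq : (4 * k * l * p) ^ 2 < (4 * k * l * m) ^ 2 := by
    have : (4 * k * l * m) ^ 2 - (1 + a + b + c) ^ 2
        = 1 - a ^ 2 - b ^ 2 - c ^ 2 + 2 * a * b * c := by
      rw [mul_pow, mul_pow, mul_pow, hk2, hl2, hm2]; ring
    rw [hp]; linarith
  have hlt := (abs_lt_of_sq_lt_sq hsq (by positivity)).trans_le' (le_abs_self _)
  exact lt_of_mul_lt_mul_left hlt (by positivity)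

/-- Menelaus (Spherics, Prop. 27): in a nondegenerate spherical triangle `ABC` on
the unit sphere, if `D` and `E` are the midpoints of the minimizing great-circle
arcs `AB` and `BC` respectively, then `DE > AC / 2`. A point `D` is the midpoint
of the minimizing arc `AB` iff it lies on the sphere, is equidistant from `A` and
`B`, and `d(A,D) + d(D,B) = d(A,B)`. -/
theorem spherical_midline_gt_half_base
    (A B C D E : EuclideanSpace ℝ (Fin 3))
    (hA : ‖A‖ = 1) (hB : ‖B‖ = 1) (hC : ‖C‖ = 1) (hD : ‖D‖ = 1) (hE : ‖E‖ = 1)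
    (hindep : LinearIndependent ℝ ![A, B, C])
    (hDmid : sphDist A D = sphDist D B ∧ sphDist A D + sphDist D B = sphDist A B)
    (hEmid : sphDist B E = sphDist E C ∧ sphDist B E + sphDist E C = sphDist B C) :
    sphDist A C / 2 < sphDist D E := by
  have hABD := add_eq_smul_of_arccos_midpoint hA hB hD hDmid.1 hDmid.2
  have hBCE := add_eq_smul_of_arccos_midpoint hB hC hE hEmid.1 hEmid.2
  have hsq {x y : EuclideanSpace ℝ (Fin 3)} (hx : ‖x‖ = 1) (hy : ‖y‖ = 1) :
      √((1 + ⟪x, y⟫) / 2) ^ 2 = (1 + ⟪x, y⟫) / 2 :=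
    sq_sqrt (by linarith [neg_one_le_real_inner_of_norm_eq_one hx hy])
  have hinner : ⟪A + B, B + C⟫ = 1 + ⟪B, C⟫ + ⟪A, C⟫ + ⟪A, B⟫ := by
    simp only [inner_add_left, inner_add_right, real_inner_self_eq_norm_sq, hB]; ring
  rw [hABD, hBCE, real_inner_smul_left, real_inner_smul_right] at hinner
  refine half_arccos_lt_arccos (neg_one_le_real_inner_of_norm_eq_one hA hC)
    (real_inner_le_one_of_norm_eq_one hA hC) (neg_one_le_real_inner_of_norm_eq_one hD hE) ?_
  exact lt_of_four_mul_eq_of_gram_pos (sqrt_nonneg _) (sqrt_nonneg _) (sqrt_nonneg _)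
    (hsq hA hB) (hsq hB hC) (hsq hA hC)
    (gram_det_pos_of_linearIndependent hA hB hC hindep) (by linear_combination hinner)
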